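/- The simple mean inequalities ((1+√x)/2)² ≤ (1+x)/2 ≤ 2((1+√x)/2)² hold for all x ≥ 0, and consequently for any positive definite diagonal density matrix D and self-adjoint A, the Wigner–Yanase skew information I^{WY}(D,A) = −(1/2) Tr [D^{1/2},A]² and the SLD skew information I^{SLD}(D,A) satisfy I^{WY}(D,A) ≤ I^{SLD}(D,A) ≤ 2 I^{WY}(D,A). -/

import Mathlib

/-!
Write `W(a, b) = ((√a + √b)/2)²` and `M(a, b) = (a + b)/2`; the mean inequalities are
`W ≤ M ≤ 2W`, and `x ↦ W(x, 1)`, `x ↦ M(x, 1)` are the standard functions of the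
Wigner–Yanase and SLD metrics. For `D = Diag(λ)` both skew informations are sums over `(i, j)`
of `|A i j|²` times a weight: the `(i, j)` weight of `I^{WY}` is `(√λᵢ - √λⱼ)²/2 = (λᵢ - λⱼ)²/(8W)`
and that of `I^{SLD}` is `(λᵢ - λⱼ)²/(4M)`, with `W, M` evaluated at `(λᵢ, λⱼ)`. So the mean
inequalities compare the two weights termwise.
-/

open Matrix

theorem sq_sqrt_add_sqrt_div_two_le {a b : ℝ} (ha : 0 ≤ a) (hb : 0 ≤ b) :
    ((√a + √b) / 2) ^ 2 ≤ (a + b) / 2 := by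
  nlinarith [sq_nonneg (√a - √b), Real.sq_sqrt ha, Real.sq_sqrt hb]

theorem add_div_two_le_two_mul_sq_sqrt_add_sqrt {a b : ℝ} (ha : 0 ≤ a) (hb : 0 ≤ b) :
    (a + b) / 2 ≤ 2 * ((√a + √b) / 2) ^ 2 := by
  nlinarith [mul_nonneg (Real.sqrt_nonneg a) (Real.sqrt_nonneg b), Real.sq_sqrt ha,
    Real.sq_sqrt hb]

theorem sq_sub_eq_four_mul_sq_sqrt_sub_mul_sq {a b : ℝ} (ha : 0 ≤ a) (hb : 0 ≤ b) :
    (a - b) ^ 2 = 4 * (√a - √b) ^ 2 * ((√a + √b) / 2) ^ 2 := by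
  nth_rewrite 1 [← Real.sq_sqrt ha, ← Real.sq_sqrt hb]
  ring

theorem half_sq_sqrt_sub_sqrt_le_sld_weight_le_two_mul {a b : ℝ} (ha : 0 < a) (hb : 0 < b) :
    (1 / 2) * (√a - √b) ^ 2 ≤ (1 / 2) / 2 * ((a - b) ^ 2 / (b * ((1 + a / b) / 2))) ∧
      (1 / 2) / 2 * ((a - b) ^ 2 / (b * ((1 + a / b) / 2))) ≤ 2 * ((1 / 2) * (√a - √b) ^ 2) := by
  have hden : b * ((1 + a / b) / 2) = (a + b) / 2 := by field_simp; ring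
  have hWM := sq_sqrt_add_sqrt_div_two_le ha.le hb.le
  have hMW := add_div_two_le_two_mul_sq_sqrt_add_sqrt ha.le hb.le
  set W := ((√a + √b) / 2) ^ 2
  have hd := sq_nonneg (√a - √b)
  rw [hden, sq_sub_eq_four_mul_sq_sqrt_sub_mul_sq ha.le hb.le,
    show (1 / 2 : ℝ) / 2 * (4 * (√a - √b) ^ 2 * W / ((a + b) / 2)) =
      (√a - √b) ^ 2 * W / ((a + b) / 2) by ring]
  have hM : 0 < (a + b) / 2 := by positivity
  constructor
  · rw [le_div_iff₀ hM]
    nlinarith [mul_le_mul_of_nonneg_left hMW hd]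
  · rw [div_le_iff₀ hM]
    nlinarith [mul_le_mul_of_nonneg_left hWM hd]

section Commutator

variable {n : Type*} [Fintype n] [DecidableEq n]

theorem diagonal_mul_sub_mul_diagonal_apply {R : Type*} [CommRing R] (d : n → R)
    (A : Matrix n n R) (i j : n) :
    (diagonal d * A - A * diagonal d) i j = (d i - d j) * A i j := by
  simp only [Matrix.sub_apply, diagonal_mul, mul_diagonal]
  ring

/-- `[D, A]` is skew-Hermitian, so its square has trace `-∑ |[D, A] i j|²`. -/
theorem re_neg_half_mul_trace_commutator_sq {A : Matrix n n ℂ} (hA : A.IsHermitian)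
    (d : n → ℝ) :
    let C := diagonal (fun i => (d i : ℂ)) * A - A * diagonal (fun i => (d i : ℂ))
    (-(1 / 2 : ℂ) * (C * C).trace).re = ∑ i, ∑ j, (1 / 2) * (d i - d j) ^ 2 * ‖A i j‖ ^ 2 := by
  intro C
  have hentry (i j : n) :
      C i j * C j i = ((-((d i - d j) ^ 2 * ‖A i j‖ ^ 2) : ℝ) : ℂ) := by
    simp only [C, diagonal_mul_sub_mul_diagonal_apply, ← hA.apply j i]
    calc ((d i : ℂ) - d j) * A i j * ((d j - d i) * star (A i j))
        = -((d i : ℂ) - d j) ^ 2 * (A i j * star (A i j)) := by ring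
      _ = _ := by rw [Complex.star_def, Complex.mul_conj']; push_cast; ring
  simp only [trace, diag_apply, mul_apply, hentry, ← Complex.ofReal_sum]
  rw [show -(1 / 2 : ℂ) = ((-(1 / 2) : ℝ) : ℂ) by push_cast; rfl, ← Complex.ofReal_mul,
    Complex.ofReal_re, Finset.mul_sum]
  refine Finset.sum_congr rfl fun i _ => ?_
  rw [Finset.mul_sum]
  exact Finset.sum_congr rfl fun j _ => by ring

end Commutator

theorem stmt19_general {n : ℕ} (lam : Fin n → ℝ) (hlam : ∀ i, 0 < lam i)
    (A : Matrix (Fin n) (Fin n) ℂ) (hA : A.IsHermitian)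
    (Dsqrt : Matrix (Fin n) (Fin n) ℂ)
    (hDsqrt : Dsqrt = Matrix.diagonal fun i => ((Real.sqrt (lam i) : ℝ) : ℂ))
    (IWY ISLD : ℝ)
    (hIWY : IWY = (-(1 / 2 : ℂ) * ((Dsqrt * A - A * Dsqrt) * (Dsqrt * A - A * Dsqrt)).trace).re)
    (hISLD : ISLD = (1 / 2) / 2 *
      ∑ i, ∑ j, (lam i - lam j) ^ 2 / (lam j * ((1 + lam i / lam j) / 2)) * ‖A i j‖ ^ 2) :
    (∀ x ≥ (0 : ℝ),
        ((1 + Real.sqrt x) / 2) ^ 2 ≤ (1 + x) / 2 ∧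
        (1 + x) / 2 ≤ 2 * ((1 + Real.sqrt x) / 2) ^ 2)
    ∧ IWY ≤ ISLD ∧ ISLD ≤ 2 * IWY := by
  refine ⟨fun x hx => ?_, ?_⟩
  · have hWM := sq_sqrt_add_sqrt_div_two_le zero_le_one hx
    have hMW := add_div_two_le_two_mul_sq_sqrt_add_sqrt zero_le_one hx
    rw [Real.sqrt_one] at hWM hMW
    exact ⟨hWM, hMW⟩
  have hWY : IWY = ∑ i, ∑ j, (1 / 2) * (√(lam i) - √(lam j)) ^ 2 * ‖A i j‖ ^ 2 := by
    rw [hIWY, hDsqrt]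
    exact re_neg_half_mul_trace_commutator_sq hA _
  have hweight i j := half_sq_sqrt_sub_sqrt_le_sld_weight_le_two_mul (hlam i) (hlam j)
  have hnorm (i j : Fin n) : 0 ≤ ‖A i j‖ ^ 2 := sq_nonneg _
  rw [hWY, hISLD]
  simp only [Finset.mul_sum]
  constructor <;>
  refine Finset.sum_le_sum fun i _ => Finset.sum_le_sum fun j _ => ?_
  · linarith [mul_le_mul_of_nonneg_right (hweight i j).1 (hnorm i j)]
  · linarith [mul_le_mul_of_nonneg_right (hweight i j).2 (hnorm i j)]

/-- the mean inequalities `((1+√x)/2)² ≤ (1+x)/2 ≤ 2((1+√x)/2)²` hold for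
all `x ≥ 0`; consequently, for a positive definite diagonal density matrix `D = Diag(λ)`
and self-adjoint `A`, the Wigner–Yanase skew information
`I^{WY}(D,A) = −(1/2) Tr [D^{1/2},A]²` and the SLD skew information `I^{SLD}(D,A)`
(given by the general formula `I^f_D(A) = (f(0)/2) Σ_{ij} (λᵢ-λⱼ)²/(λⱼ f(λᵢ/λⱼ)) |A_{ij}|²`
with `f(x) = (1+x)/2`) satisfy `I^{WY} ≤ I^{SLD} ≤ 2 I^{WY}`. -/
theorem stmt19 {n : ℕ} (lam : Fin n → ℝ) (hlam : ∀ i, 0 < lam i)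
    (hdensity : ∑ i, lam i = 1)
    (A : Matrix (Fin n) (Fin n) ℂ) (hA : A.IsHermitian)
    (Dsqrt : Matrix (Fin n) (Fin n) ℂ)
    (hDsqrt : Dsqrt = Matrix.diagonal fun i => ((Real.sqrt (lam i) : ℝ) : ℂ))
    (IWY ISLD : ℝ)
    (hIWY : IWY = (-(1 / 2 : ℂ) * ((Dsqrt * A - A * Dsqrt) * (Dsqrt * A - A * Dsqrt)).trace).re)
    (hISLD : ISLD = (1 / 2) / 2 *
      ∑ i, ∑ j, (lam i - lam j) ^ 2 / (lam j * ((1 + lam i / lam j) / 2)) * ‖A i j‖ ^ 2) :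
    (∀ x ≥ (0 : ℝ),
        ((1 + Real.sqrt x) / 2) ^ 2 ≤ (1 + x) / 2 ∧
        (1 + x) / 2 ≤ 2 * ((1 + Real.sqrt x) / 2) ^ 2)
    ∧ IWY ≤ ISLD ∧ ISLD ≤ 2 * IWY :=
  stmt19_general lam hlam A hA Dsqrt hDsqrt IWY ISLD hIWY hISLD
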